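/- arXiv:2304.11329 — 3 statements merged into one kernel-verified Lean document; each statement's English description precedes it below -/
import Mathlib

section
/- With a₁, a₂ linearly independent in ℝ³, contravariant vectors a¹, a² as above, and c := (1/√(det G)) (a₁ ⊗ a₂ − a₂ ⊗ a₁) where G is the 2×2 Gram matrix with G_{αβ} = a_α · a_β, the matrix c is skew-symmetric and satisfies c² = −a, where a = a₁ ⊗ a¹ + a₂ ⊗ a² is the first fundamental tensor. -/
open Matrix

/-- The surface alternating pseudo-tensor `c` is skew-symmetric and satisfies `c² = −a`,
where `a` is the first fundamental tensor. -/
theorem alternating_pseudo_tensor_complex_structure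
    (a₁ a₂ a1' a2' : Fin 3 → ℝ)
    (hli : LinearIndependent ℝ ![a₁, a₂])
    (n₀ : Fin 3 → ℝ)
    (hn₀ : n₀ = (Real.sqrt ((crossProduct a₁ a₂) ⬝ᵥ (crossProduct a₁ a₂)))⁻¹ •
        crossProduct a₁ a₂)
    (horth1 : a1' ⬝ᵥ n₀ = 0) (horth2 : a2' ⬝ᵥ n₀ = 0)
    (hdual11 : a₁ ⬝ᵥ a1' = 1) (hdual12 : a₁ ⬝ᵥ a2' = 0)
    (hdual21 : a₂ ⬝ᵥ a1' = 0) (hdual22 : a₂ ⬝ᵥ a2' = 1) :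
    let G : Matrix (Fin 2) (Fin 2) ℝ := !![a₁ ⬝ᵥ a₁, a₁ ⬝ᵥ a₂; a₂ ⬝ᵥ a₁, a₂ ⬝ᵥ a₂]
    let c : Matrix (Fin 3) (Fin 3) ℝ :=
      (Real.sqrt G.det)⁻¹ • (vecMulVec a₁ a₂ - vecMulVec a₂ a₁)
    let a : Matrix (Fin 3) (Fin 3) ℝ := vecMulVec a₁ a1' + vecMulVec a₂ a2'
    cᵀ = -c ∧ c * c = -a := by
  intro G c a
  set w : Fin 3 → ℝ := crossProduct a₁ a₂ with hwdef
  have hw : w ≠ 0 := crossProduct_ne_zero_iff_linearIndependent.mpr hli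
  have hww : 0 < w ⬝ᵥ w := by
    rcases lt_or_eq_of_le (Finset.sum_nonneg fun i _ => mul_self_nonneg (w i)) with h | h
    · exact h
    · exact absurd (dotProduct_self_eq_zero.mp h.symm) hw
  have hG : G.det = w ⬝ᵥ w := by
    simp [G, Matrix.det_fin_two, dotProduct, Fin.sum_univ_three, hwdef, cross_apply]
    ring
  have hdet : 0 < G.det := hG ▸ hww
  -- orthogonality of a₁, a₂ to w
  have ha1w : w ⬝ᵥ a₁ = 0 := by
    simp [hwdef, dotProduct, Fin.sum_univ_three, cross_apply]; ring
  have ha2w : w ⬝ᵥ a₂ = 0 := by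
    simp [hwdef, dotProduct, Fin.sum_univ_three, cross_apply]; ring
  have hsp : (0:ℝ) < (Real.sqrt (w ⬝ᵥ w))⁻¹ := by positivity
  have h1w : w ⬝ᵥ a1' = 0 := by
    rw [hn₀, dotProduct_smul, smul_eq_mul, mul_eq_zero] at horth1
    rw [dotProduct_comm]
    exact horth1.resolve_left (ne_of_gt hsp)
  have h2w : w ⬝ᵥ a2' = 0 := by
    rw [hn₀, dotProduct_smul, smul_eq_mul, mul_eq_zero] at horth2
    rw [dotProduct_comm]
    exact horth2.resolve_left (ne_of_gt hsp)
  -- key: vectors orthogonal to a₁, a₂, w are zero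
  have key : ∀ d : Fin 3 → ℝ, a₁ ⬝ᵥ d = 0 → a₂ ⬝ᵥ d = 0 → w ⬝ᵥ d = 0 → d = 0 := by
    intro d h1 h2 h3
    set N : Matrix (Fin 3) (Fin 3) ℝ := Matrix.of ![a₁, a₂, w] with hN
    have hdN : N.det = w ⬝ᵥ w := by
      simp [hN, Matrix.det_fin_three, hwdef, cross_apply, dotProduct, Fin.sum_univ_three]
      ring
    have hinj : Function.Injective (N.mulVec) :=
      mulVec_injective_iff_isUnit.mpr ((Matrix.isUnit_iff_isUnit_det N).mpr
        (isUnit_iff_ne_zero.mpr (hdN ▸ ne_of_gt hww)))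
    have : N *ᵥ d = N *ᵥ 0 := by
      rw [Matrix.mulVec_zero]
      ext i
      fin_cases i <;> simpa [hN, Matrix.mulVec, Matrix.of_apply]
        using (by assumption : _ ⬝ᵥ d = 0)
    exact hinj this
  -- explicit formulas for the dual vectors
  have ha1' : G.det • a1' = (a₂ ⬝ᵥ a₂) • a₁ - (a₁ ⬝ᵥ a₂) • a₂ := by
    have hd := key (G.det • a1' - ((a₂ ⬝ᵥ a₂) • a₁ - (a₁ ⬝ᵥ a₂) • a₂)) ?_ ?_ ?_
    · exact sub_eq_zero.mp hd
    · simp [dotProduct_sub, dotProduct_smul, hdual11, G, Matrix.det_fin_two,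
        dotProduct_comm a₂ a₁] <;> ring
    · simp [dotProduct_sub, dotProduct_smul, hdual21, G, Matrix.det_fin_two,
        dotProduct_comm a₂ a₁] <;> ring
    · simp [dotProduct_sub, dotProduct_smul, h1w, ha1w, ha2w]
  have ha2' : G.det • a2' = (a₁ ⬝ᵥ a₁) • a₂ - (a₁ ⬝ᵥ a₂) • a₁ := by
    have hd := key (G.det • a2' - ((a₁ ⬝ᵥ a₁) • a₂ - (a₁ ⬝ᵥ a₂) • a₁)) ?_ ?_ ?_
    · exact sub_eq_zero.mp hd
    · simp [dotProduct_sub, dotProduct_smul, hdual12, G, Matrix.det_fin_two,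
        dotProduct_comm a₂ a₁] <;> ring
    · simp [dotProduct_sub, dotProduct_smul, hdual22, G, Matrix.det_fin_two,
        dotProduct_comm a₂ a₁] <;> ring
    · simp [dotProduct_sub, dotProduct_smul, h2w, ha1w, ha2w]
  have h1 : ∀ j, G.det * a1' j = (a₂ ⬝ᵥ a₂) * a₁ j - (a₁ ⬝ᵥ a₂) * a₂ j := by
    intro j
    have := congrFun ha1' j
    simpa using this
  have h2 : ∀ j, G.det * a2' j = (a₁ ⬝ᵥ a₁) * a₂ j - (a₁ ⬝ᵥ a₂) * a₁ j := by
    intro j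
    have := congrFun ha2' j
    simpa using this
  constructor
  · ext i j
    simp [c, vecMulVec_apply]
    ring
  · have hs : (Real.sqrt G.det)⁻¹ * (Real.sqrt G.det)⁻¹ = (G.det)⁻¹ := by
      rw [← mul_inv, Real.mul_self_sqrt hdet.le]
    have step : c * c = (G.det)⁻¹ •
        ((vecMulVec a₁ a₂ - vecMulVec a₂ a₁) * (vecMulVec a₁ a₂ - vecMulVec a₂ a₁)) := by
      show ((Real.sqrt G.det)⁻¹ • _) * ((Real.sqrt G.det)⁻¹ • _) = _
      rw [smul_mul_assoc, mul_smul_comm, smul_smul, hs]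
    rw [step, inv_smul_eq_iff₀ (ne_of_gt hdet)]
    ext i j
    simp only [Matrix.mul_apply, Matrix.smul_apply, Matrix.neg_apply, Matrix.add_apply,
      Matrix.sub_apply, vecMulVec_apply, Fin.sum_univ_three, smul_eq_mul,
      Pi.smul_apply, Pi.sub_apply, a]
    have e1 := h1 j
    have e2 := h2 j
    simp only [dotProduct, Fin.sum_univ_three] at e1 e2
    linear_combination (a₁ i) * e1 + (a₂ i) * e2
end

section
/- Let (M, d) be a metric space, N ∈ ℕ, and λ₁, …, λ_N : Ω → ℝ continuous functions on a topological space Ω. Suppose (R_k) is a sequence of functions R_k : Ω → M such that for each k and each η ∈ Ω, R_k(η) minimizes p ↦ Σᵢ λᵢ(η) d(p, R_k(aᵢ))² over M (where a₁, …, a_N ∈ Ω are fixed points), and R_k converges pointwise to R : Ω → M. Then for each η ∈ Ω, R(η) minimizes p ↦ Σᵢ λᵢ(η) d(p, R(aᵢ))² over M. -/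
/-- Pointwise limits of geodesic finite element functions are geodesic finite element
functions: if each `R_k(η)` minimizes `p ↦ Σᵢ λᵢ(η) d(p, R_k(aᵢ))²` over a metric space `M`
and `R_k → R` pointwise, then `R(η)` minimizes `p ↦ Σᵢ λᵢ(η) d(p, R(aᵢ))²`. -/
theorem pointwise_limit_of_geodesic_fe_functions
    (M : Type*) [MetricSpace M]
    (Ω : Type*) [TopologicalSpace Ω]
    (N : ℕ) (lam : Fin N → Ω → ℝ) (hlam : ∀ i, Continuous (lam i))
    (a : Fin N → Ω)
    (Rk : ℕ → Ω → M)
    (hmin : ∀ k (η : Ω) (p : M),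
      ∑ i, lam i η * dist (Rk k η) (Rk k (a i)) ^ 2
        ≤ ∑ i, lam i η * dist p (Rk k (a i)) ^ 2)
    (R : Ω → M)
    (hconv : ∀ η : Ω, Filter.Tendsto (fun k => Rk k η) Filter.atTop (nhds (R η))) :
    ∀ (η : Ω) (p : M),
      ∑ i, lam i η * dist (R η) (R (a i)) ^ 2
        ≤ ∑ i, lam i η * dist p (R (a i)) ^ 2 := by
  intro η p
  have hf : Filter.Tendsto (fun k => ∑ i, lam i η * dist (Rk k η) (Rk k (a i)) ^ 2)
      Filter.atTop (nhds (∑ i, lam i η * dist (R η) (R (a i)) ^ 2)) := by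
    apply tendsto_finset_sum
    intro i _
    exact (((hconv η).dist (hconv (a i))).pow 2).const_mul _
  have hg : Filter.Tendsto (fun k => ∑ i, lam i η * dist p (Rk k (a i)) ^ 2)
      Filter.atTop (nhds (∑ i, lam i η * dist p (R (a i)) ^ 2)) := by
    apply tendsto_finset_sum
    intro i _
    exact ((tendsto_const_nhds.dist (hconv (a i))).pow 2).const_mul _
  exact le_of_tendsto_of_tendsto' hf hg (fun k => hmin k η p)
end

section
/- For matrices X, Y ∈ ℝ^{3×3} whose row spaces are orthogonal to n₀ (i.e., X n₀ = Y n₀ = 0 when n₀ multiplies on the right), one has ⟨skew X, skew Y⟩ = ⟨skew(aX), skew(aY)⟩ + ½ (n₀ᵀX)·(n₀ᵀY) and tr X = tr(aX), where a = 1 − n₀n₀ᵀ is the orthogonal projector onto the plane orthogonal to the unit vector n₀. -/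
open Matrix

/-- Frobenius inner product of 3×3 real matrices. -/
def frobInner (A B : Matrix (Fin 3) (Fin 3) ℝ) : ℝ := Matrix.trace (Aᵀ * B)

/-- Skew-symmetric part of a matrix. -/
noncomputable def skewPart (A : Matrix (Fin 3) (Fin 3) ℝ) : Matrix (Fin 3) (Fin 3) ℝ :=
  (2 : ℝ)⁻¹ • (A - Aᵀ)

lemma frob_skew (A B : Matrix (Fin 3) (Fin 3) ℝ) :
    frobInner (skewPart A) (skewPart B)
      = (2:ℝ)⁻¹ * (Matrix.trace (Aᵀ*B) - Matrix.trace (A*B)) := by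
  have h1 : Matrix.trace (Aᵀ*Bᵀ) = Matrix.trace (A*B) := by
    rw [← Matrix.transpose_mul, Matrix.trace_transpose, Matrix.trace_mul_comm]
  have h2 : Matrix.trace (A*Bᵀ) = Matrix.trace (Aᵀ*B) := by
    rw [Matrix.trace_mul_comm, ← Matrix.trace_transpose (Bᵀ*A), Matrix.transpose_mul,
      Matrix.transpose_transpose]
  simp only [frobInner, skewPart, transpose_smul, transpose_sub, transpose_transpose,
    smul_mul_assoc, mul_smul_comm, sub_mul, mul_sub, Matrix.trace_smul, Matrix.trace_sub,
    smul_eq_mul]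
  rw [h1, h2]; ring

/-- For matrices annihilating a unit vector `n₀` on the right, the skew inner product
splits as `⟨skew X, skew Y⟩ = ⟨skew(aX), skew(aY)⟩ + ½ (n₀ᵀX)·(n₀ᵀY)` and
`tr X = tr(aX)`, where `a = 1 − n₀n₀ᵀ`. -/
theorem skew_inner_and_trace_identities
    (n₀ : Fin 3 → ℝ) (hn : n₀ ⬝ᵥ n₀ = 1)
    (X Y : Matrix (Fin 3) (Fin 3) ℝ)
    (hX : X *ᵥ n₀ = 0) (hY : Y *ᵥ n₀ = 0) :
    let a : Matrix (Fin 3) (Fin 3) ℝ := 1 - vecMulVec n₀ n₀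
    frobInner (skewPart X) (skewPart Y)
      = frobInner (skewPart (a * X)) (skewPart (a * Y))
        + (2 : ℝ)⁻¹ * ((n₀ ᵥ* X) ⬝ᵥ (n₀ ᵥ* Y)) ∧
    Matrix.trace X = Matrix.trace (a * X) := by
  intro a
  set N : Matrix (Fin 3) (Fin 3) ℝ := vecMulVec n₀ n₀ with hNdef
  have ha : a = 1 - N := rfl
  have hn' : n₀ 0 * n₀ 0 + n₀ 1 * n₀ 1 + n₀ 2 * n₀ 2 = 1 := by
    simpa [dotProduct, Fin.sum_univ_three] using hn
  have hXcomp : ∀ i, X i 0 * n₀ 0 + X i 1 * n₀ 1 + X i 2 * n₀ 2 = 0 := by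
    intro i
    have := congrFun hX i
    simpa [Matrix.mulVec, dotProduct, Fin.sum_univ_three] using this
  have hYcomp : ∀ i, Y i 0 * n₀ 0 + Y i 1 * n₀ 1 + Y i 2 * n₀ 2 = 0 := by
    intro i
    have := congrFun hY i
    simpa [Matrix.mulVec, dotProduct, Fin.sum_univ_three] using this
  have hNsymm : Nᵀ = N := by
    ext i j
    simp [hNdef, vecMulVec_apply, transpose_apply, mul_comm]
  have hNN : N * N = N := by
    ext i j
    simp [hNdef, Matrix.mul_apply, vecMulVec_apply, Fin.sum_univ_three]
    linear_combination (n₀ i * n₀ j) * hn'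
  have hXN : X * N = 0 := by
    ext i j
    simp [hNdef, Matrix.mul_apply, vecMulVec_apply, Fin.sum_univ_three]
    linear_combination n₀ j * hXcomp i
  have hYN : Y * N = 0 := by
    ext i j
    simp [hNdef, Matrix.mul_apply, vecMulVec_apply, Fin.sum_univ_three]
    linear_combination n₀ j * hYcomp i
  have e1 : ∀ Z : Matrix (Fin 3) (Fin 3) ℝ, (1 - N) * Z = Z - N * Z := by
    intro Z; rw [sub_mul, one_mul]
  have key1 : ((1 - N) * X)ᵀ * ((1 - N) * Y) = Xᵀ*Y - Xᵀ*(N*Y) := by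
    have h1 : ((1-N)*X)ᵀ = Xᵀ - Xᵀ*N := by
      rw [Matrix.transpose_mul, Matrix.transpose_sub, Matrix.transpose_one, hNsymm,
        Matrix.mul_sub, Matrix.mul_one]
    rw [h1, e1, sub_mul, Matrix.mul_sub, Matrix.mul_sub,
      Matrix.mul_assoc Xᵀ N Y, Matrix.mul_assoc Xᵀ N (N*Y), ← Matrix.mul_assoc N N Y, hNN]
    abel
  have key2 : ((1 - N) * X) * ((1 - N) * Y) = X*Y - N*(X*Y) := by
    rw [e1, e1, sub_mul, Matrix.mul_sub, Matrix.mul_sub]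
    have hx1 : X * (N * Y) = 0 := by rw [← Matrix.mul_assoc, hXN, Matrix.zero_mul]
    have hx2 : (N * X) * (N * Y) = 0 := by
      rw [Matrix.mul_assoc, hx1, Matrix.mul_zero]
    rw [hx1, hx2, Matrix.mul_assoc]
    abel
  have trNXY : Matrix.trace (N * (X * Y)) = 0 := by
    rw [Matrix.trace_mul_comm, Matrix.mul_assoc, hYN, Matrix.mul_zero, Matrix.trace_zero]
  have trXNY : Matrix.trace (Xᵀ * (N * Y)) = (n₀ ᵥ* X) ⬝ᵥ (n₀ ᵥ* Y) := by
    simp [hNdef, Matrix.trace, Matrix.diag, Matrix.mul_apply, vecMulVec_apply,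
      Matrix.vecMul, dotProduct, Fin.sum_univ_three, transpose_apply]
    ring
  have trNX : Matrix.trace (N * X) = 0 := by
    rw [Matrix.trace_mul_comm, hXN, Matrix.trace_zero]
  constructor
  · rw [frob_skew, frob_skew, ha, key1, key2, Matrix.trace_sub, Matrix.trace_sub, trNXY, trXNY]
    ring
  · rw [ha, e1, Matrix.trace_sub, trNX, sub_zero]
end
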